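/- arXiv:2409.03726 — 9 statements merged into one kernel-verified Lean document; each statement's English description precedes it below -/
import Mathlib

section
/- Let L be a Lie algebra with a Z-grading L = L_{-2} ⊕ L_0 ⊕ L_2 where L_0 = [L_{-2}, L_2]. Any bilinear map (·|·) : L_{-2} × L_2 → F satisfying ([a,[c,d]]|b) + (a|[b,[c,d]]) = ([[a,b],c]|d) + (c|[[a,b],d]) for all a,c ∈ L_{-2}, b,d ∈ L_2 extends uniquely to a 2-cocycle on L (i.e. a skew-symmetric bilinear form ψ with ψ([x,y]|z) + ψ([y,z]|x) + ψ([z,x]|y) = 0) vanishing on L_i × L_j for i + j ≠ 0. -/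
/-!
A cocycle `ψ` of the required kind is forced: it is `B` on `L₋₂ × L₂` and zero on pairs of nonzero
total degree, and on `L₀ × L₀` the cocycle identity for `a ∈ L₋₂`, `b ∈ L₂`, `z ∈ L₀` forces
`ψ([a,b], z) = B([a,z], b) + B(a, [b,z])`. This gives uniqueness, since `L₀` is spanned by the
`[a,b]`.

For existence, the right-hand side is a functional `f_{ab}` of `z`, and identity (1) says exactly
that `f_{ab}([c,d]) = -f_{cd}([a,b])`. This antisymmetry is what makes `ψ([a,b], z) := f_{ab}(z)` a
well-defined skew form on `L₀ = span [L₋₂, L₂]`. For the resulting `ψ`, the cyclic sum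
`ψ([x,y],z) + ψ([y,z],x) + ψ([z,x],y)` vanishes for degree reasons unless the degrees of `x, y, z`
are `(0,0,0)` or a permutation of `(-2,0,2)`. In the latter case it is the defining formula again,
and in the former it follows from the formula and the Jacobi identity.
-/

open Set Submodule

section SkewForm
variable {R M : Type*} [CommRing R] [AddCommGroup M] [Module R M]

theorem exists_skew_form_on_span {ι : Type*} (g : ι → M) (f : ι → M →ₗ[R] R)
    (hf : ∀ i j, f i (g j) = -f j (g i)) {S : Submodule R M} (hS : span R (range g) = S) :
    ∃ C : S →ₗ[R] S →ₗ[R] R, (∀ i (hi : g i ∈ S) y, C ⟨g i, hi⟩ y = f i y) ∧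
      ∀ x y, C x y = -C y x := by
  subst hS
  have hrange := Finsupp.range_linearCombination R (v := g)
  let β : (ι →₀ R) →ₗ[R] span R (range g) :=
    (Finsupp.linearCombination R g).codRestrict _ fun l => hrange ▸ LinearMap.mem_range_self _ l
  let Φ : (ι →₀ R) →ₗ[R] span R (range g) →ₗ[R] R :=
    Finsupp.linearCombination R fun i => (f i).domRestrict _
  have hβ : Function.Surjective β := by
    rintro ⟨x, hx⟩
    obtain ⟨l, rfl⟩ := hrange ▸ hx
    exact ⟨l, rfl⟩
  have hΦ : ∀ l l', Φ l (β l') = -Φ l' (β l) := by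
    intro l l'
    induction l using Finsupp.induction_linear with
    | zero => simp
    | add l₁ l₂ h₁ h₂ => simp only [map_add, LinearMap.add_apply, h₁, h₂]; ring
    | single i a =>
      induction l' using Finsupp.induction_linear with
      | zero => simp
      | add l₁ l₂ h₁ h₂ => simp only [map_add, LinearMap.add_apply, h₁, h₂]; ring
      | single j b =>
        simp only [Φ, β, Finsupp.linearCombination_single, LinearMap.codRestrict_apply,
          LinearMap.smul_apply, LinearMap.domRestrict_apply, map_smul, smul_eq_mul, hf i j]
        ring
  have hker : LinearMap.ker β ≤ LinearMap.ker Φ := fun l hl => by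
    ext y
    obtain ⟨l', rfl⟩ := hβ y
    simp [hΦ l l', LinearMap.mem_ker.1 hl]
  let C := (LinearMap.ker β).liftQ Φ hker ∘ₗ (β.quotKerEquivOfSurjective hβ).symm.toLinearMap
  have hC : ∀ l, C (β l) = Φ l := fun l => by
    simp [C, LinearMap.quotKerEquivOfSurjective_symm_apply]
  refine ⟨C, fun i hi y => ?_, fun x y => ?_⟩
  · have : (⟨g i, hi⟩ : span R (range g)) = β (Finsupp.single i 1) := by
      ext; simp [β]
    rw [this, hC]; simp [Φ]
  · obtain ⟨l, rfl⟩ := hβ x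
    obtain ⟨l', rfl⟩ := hβ y
    rw [hC, hC, hΦ]

end SkewForm

section DegreeZero
variable {R M : Type*} [CommRing R] [AddCommGroup M] [Module R M] {Lm Lz Lp : Submodule R M}

def gradedPiece (Lm Lz Lp : Submodule R M) (i : ℤ) : Submodule R M :=
  if i = -2 then Lm else if i = 0 then Lz else if i = 2 then Lp else ⊥

@[simp] theorem gradedPiece_neg_two : gradedPiece Lm Lz Lp (-2) = Lm := by simp [gradedPiece]
@[simp] theorem gradedPiece_zero : gradedPiece Lm Lz Lp 0 = Lz := by simp [gradedPiece]
@[simp] theorem gradedPiece_two : gradedPiece Lm Lz Lp 2 = Lp := by simp [gradedPiece]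

theorem mem_gradedPiece {i : ℤ} {x : M} (hx : x ∈ gradedPiece Lm Lz Lp i) :
    (i = -2 ∧ x ∈ Lm) ∨ (i = 0 ∧ x ∈ Lz) ∨ (i = 2 ∧ x ∈ Lp) ∨ x = 0 := by
  unfold gradedPiece at hx
  split_ifs at hx <;> simp_all

theorem span_gradedPieces_eq_top (h : Lm ⊔ Lz ⊔ Lp = ⊤) :
    span R (⋃ i ∈ ({-2, 0, 2} : Set ℤ), (gradedPiece Lm Lz Lp i : Set M)) = ⊤ := by
  refine eq_top_iff.2 (h ▸ sup_le (sup_le ?_ ?_) ?_) <;> intro x hx <;> apply subset_span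
  · exact mem_iUnion₂.2 ⟨-2, by simp, by simpa using hx⟩
  · exact mem_iUnion₂.2 ⟨0, by simp, by simpa using hx⟩
  · exact mem_iUnion₂.2 ⟨2, by simp, by simpa using hx⟩

structure IsDegreeZeroSkewForm (Lm Lz Lp : Submodule R M) (ψ : M →ₗ[R] M →ₗ[R] R) : Prop where
  skew : ∀ x y, ψ x y = -ψ y x
  mm : ∀ a ∈ Lm, ∀ b ∈ Lm, ψ a b = 0
  pp : ∀ a ∈ Lp, ∀ b ∈ Lp, ψ a b = 0
  zm : ∀ a ∈ Lz, ∀ b ∈ Lm, ψ a b = 0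
  zp : ∀ a ∈ Lz, ∀ b ∈ Lp, ψ a b = 0

theorem IsDegreeZeroSkewForm.apply_eq_zero_of_add_ne_zero {ψ : M →ₗ[R] M →ₗ[R] R}
    (hψ : IsDegreeZeroSkewForm Lm Lz Lp ψ) {i j : ℤ} {x y : M} (hij : i + j ≠ 0)
    (hx : x ∈ gradedPiece Lm Lz Lp i) (hy : y ∈ gradedPiece Lm Lz Lp j) : ψ x y = 0 := by
  rcases mem_gradedPiece hx with ⟨rfl, hx⟩ | ⟨rfl, hx⟩ | ⟨rfl, hx⟩ | rfl <;>
  rcases mem_gradedPiece hy with ⟨rfl, hy⟩ | ⟨rfl, hy⟩ | ⟨rfl, hy⟩ | rfl <;>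
  first
  | simp
  | exact hψ.mm x hx y hy
  | exact hψ.pp x hx y hy
  | exact hψ.zm x hx y hy
  | exact hψ.zp x hx y hy
  | rw [hψ.skew, hψ.zm y hy x hx, neg_zero]
  | rw [hψ.skew, hψ.zp y hy x hx, neg_zero]
  | norm_num at hij

end DegreeZero

section Decomposition
variable {R M : Type*} [CommRing R] [AddCommGroup M] [Module R M] {Lm Lz Lp : Submodule R M}

theorem sup_eq_top_of_forall_exists_eq_add
    (h : ∀ x : M, ∃ t : Lm × Lz × Lp, x = t.1 + t.2.1 + t.2.2) : Lm ⊔ Lz ⊔ Lp = ⊤ :=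
  eq_top_iff.2 fun x _ => by
    obtain ⟨t, rfl⟩ := h x
    exact add_mem (add_mem (mem_sup_left (mem_sup_left t.1.2))
      (mem_sup_left (mem_sup_right t.2.1.2))) (mem_sup_right t.2.2.2)

noncomputable def tripleSumEquiv (h : ∀ x : M, ∃! t : Lm × Lz × Lp, x = t.1 + t.2.1 + t.2.2) :
    (Lm × Lz × Lp) ≃ₗ[R] M :=
  LinearEquiv.ofBijective (Lm.subtype.coprod (Lz.subtype.coprod Lp.subtype)) <|
    (Function.bijective_iff_existsUnique _).2 fun x =>
      (existsUnique_congr fun t => by simp [add_assoc, eq_comm]).1 (h x)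

variable (h : ∀ x : M, ∃! t : Lm × Lz × Lp, x = t.1 + t.2.1 + t.2.2)
  (B : M →ₗ[R] M →ₗ[R] R) (C : Lz →ₗ[R] Lz →ₗ[R] R)

theorem tripleSumEquiv_symm_of_mem_left {a : M} (ha : a ∈ Lm) :
    (tripleSumEquiv h).symm a = (⟨a, ha⟩, 0, 0) := by
  rw [LinearEquiv.symm_apply_eq]; simp [tripleSumEquiv]

theorem tripleSumEquiv_symm_of_mem_middle {a : M} (ha : a ∈ Lz) :
    (tripleSumEquiv h).symm a = (0, ⟨a, ha⟩, 0) := by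
  rw [LinearEquiv.symm_apply_eq]; simp [tripleSumEquiv]

theorem tripleSumEquiv_symm_of_mem_right {a : M} (ha : a ∈ Lp) :
    (tripleSumEquiv h).symm a = (0, 0, ⟨a, ha⟩) := by
  rw [LinearEquiv.symm_apply_eq]; simp [tripleSumEquiv]

noncomputable def extendForm : M →ₗ[R] M →ₗ[R] R :=
  let e := (tripleSumEquiv h).symm.toLinearMap
  let πm := Lm.subtype ∘ₗ LinearMap.fst R _ _ ∘ₗ e
  let πz := LinearMap.fst R _ _ ∘ₗ LinearMap.snd R _ _ ∘ₗ e
  let πp := Lp.subtype ∘ₗ LinearMap.snd R _ _ ∘ₗ LinearMap.snd R _ _ ∘ₗ e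
  B.compl₁₂ πm πp - (B.compl₁₂ πm πp).flip + C.compl₁₂ πz πz

theorem extendForm_apply (x y : M) :
    extendForm h B C x y =
      B ((tripleSumEquiv h).symm x).1 ((tripleSumEquiv h).symm y).2.2
        - B ((tripleSumEquiv h).symm y).1 ((tripleSumEquiv h).symm x).2.2
        + C ((tripleSumEquiv h).symm x).2.1 ((tripleSumEquiv h).symm y).2.1 :=
  rfl

theorem extendForm_mp : ∀ a ∈ Lm, ∀ b ∈ Lp, extendForm h B C a b = B a b := fun a ha b hb => by
  simp [extendForm_apply, tripleSumEquiv_symm_of_mem_left h ha,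
    tripleSumEquiv_symm_of_mem_right h hb]

theorem extendForm_zz {a b : M} (ha : a ∈ Lz) (hb : b ∈ Lz) :
    extendForm h B C a b = C ⟨a, ha⟩ ⟨b, hb⟩ := by
  simp [extendForm_apply, tripleSumEquiv_symm_of_mem_middle h ha,
    tripleSumEquiv_symm_of_mem_middle h hb]

theorem isDegreeZeroSkewForm_extendForm (hC : ∀ x y, C x y = -C y x) :
    IsDegreeZeroSkewForm Lm Lz Lp (extendForm h B C) where
  skew x y := by rw [extendForm_apply, extendForm_apply, hC]; ring
  mm a ha b hb := by
    simp [extendForm_apply, tripleSumEquiv_symm_of_mem_left h ha,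
      tripleSumEquiv_symm_of_mem_left h hb]
  pp a ha b hb := by
    simp [extendForm_apply, tripleSumEquiv_symm_of_mem_right h ha,
      tripleSumEquiv_symm_of_mem_right h hb]
  zm a ha b hb := by
    simp [extendForm_apply, tripleSumEquiv_symm_of_mem_middle h ha,
      tripleSumEquiv_symm_of_mem_left h hb]
  zp a ha b hb := by
    simp [extendForm_apply, tripleSumEquiv_symm_of_mem_middle h ha,
      tripleSumEquiv_symm_of_mem_right h hb]

end Decomposition

section CyclicSum
variable {R L : Type*} [CommRing R] [LieRing L] [LieAlgebra R L] (ψ : L →ₗ[R] L →ₗ[R] R)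

def cyclicSum (x y z : L) : R := ψ ⁅x, y⁆ z + ψ ⁅y, z⁆ x + ψ ⁅z, x⁆ y

variable {ψ}

theorem cyclicSum_rotate (x y z : L) : cyclicSum ψ x y z = cyclicSum ψ y z x := by
  unfold cyclicSum; ring

theorem cyclicSum_swap (x y z : L) : cyclicSum ψ y x z = -cyclicSum ψ x y z := by
  unfold cyclicSum
  rw [← lie_skew x y, ← lie_skew z y, ← lie_skew x z]
  simp only [map_neg, LinearMap.neg_apply]; ring

theorem cyclicSum_eq_zero_of_mem_span {s : Set L} {y z x : L} (hx : x ∈ span R s)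
    (h : ∀ x ∈ s, cyclicSum ψ x y z = 0) : cyclicSum ψ x y z = 0 := by
  induction hx using span_induction with
  | mem x hx => exact h x hx
  | zero => simp [cyclicSum]
  | add x x' _ _ hx hx' =>
    simp only [cyclicSum, add_lie, lie_add, map_add, LinearMap.add_apply] at hx hx' ⊢
    linear_combination hx + hx'
  | smul c x _ hx =>
    simp only [cyclicSum, smul_lie, lie_smul, map_smul, LinearMap.smul_apply, smul_eq_mul] at hx ⊢
    linear_combination c * hx

theorem cyclicSum_eq_zero_of_span_eq_top {s : Set L} (hs : span R s = ⊤)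
    (h : ∀ x ∈ s, ∀ y ∈ s, ∀ z ∈ s, cyclicSum ψ x y z = 0) (x y z : L) :
    cyclicSum ψ x y z = 0 := by
  have hspan : ∀ x, x ∈ span R s := fun x => hs ▸ mem_top
  have h₁ : ∀ x, ∀ y ∈ s, ∀ z ∈ s, cyclicSum ψ x y z = 0 := fun x y hy z hz =>
    cyclicSum_eq_zero_of_mem_span (hspan x) fun x hx => h x hx y hy z hz
  have h₂ : ∀ x y, ∀ z ∈ s, cyclicSum ψ x y z = 0 := fun x y z hz => by
    rw [cyclicSum_rotate]
    exact cyclicSum_eq_zero_of_mem_span (hspan y) fun y hy => by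
      rw [← cyclicSum_rotate]; exact h₁ x y hy z hz
  rw [cyclicSum_rotate, cyclicSum_rotate]
  exact cyclicSum_eq_zero_of_mem_span (hspan z) fun z hz => by
    rw [← cyclicSum_rotate, ← cyclicSum_rotate]; exact h₂ x y z hz

theorem cyclicSum_eq_zero_of_add_ne_zero {ι : Type*} [AddCommMonoid ι] {G : ι → Submodule R L}
    (hG : ∀ {i j x y}, x ∈ G i → y ∈ G j → ⁅x, y⁆ ∈ G (i + j))
    (hψ : ∀ {i j x y}, i + j ≠ 0 → x ∈ G i → y ∈ G j → ψ x y = 0)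
    {i j k : ι} (hijk : i + j + k ≠ 0) {x y z : L} (hx : x ∈ G i) (hy : y ∈ G j)
    (hz : z ∈ G k) : cyclicSum ψ x y z = 0 := by
  have h₁ : j + k + i ≠ 0 := by rwa [← add_rotate]
  have h₂ : k + i + j ≠ 0 := by rwa [add_rotate]
  rw [cyclicSum, hψ hijk (hG hx hy) hz, hψ h₁ (hG hy hz) hx, hψ h₂ (hG hz hx) hy, add_zero,
    add_zero]

theorem apply_lie_eq_of_cyclicSum_eq_zero (hskew : ∀ x y, ψ x y = -ψ y x) {x y z : L}
    (h : cyclicSum ψ x y z = 0) : ψ ⁅x, y⁆ z = ψ ⁅x, z⁆ y + ψ x ⁅y, z⁆ := by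
  rw [cyclicSum, hskew ⁅y, z⁆, ← lie_skew z x, map_neg, LinearMap.neg_apply] at h
  linear_combination h

end CyclicSum

section ShortGrading
variable {R L : Type*} [CommRing R] [LieRing L] [LieAlgebra R L] {Lm Lz Lp : Submodule R L}

structure IsShortGrading (Lm Lz Lp : Submodule R L) : Prop where
  lie_mm : ∀ a ∈ Lm, ∀ b ∈ Lm, ⁅a, b⁆ = 0
  lie_pp : ∀ a ∈ Lp, ∀ b ∈ Lp, ⁅a, b⁆ = 0
  lie_mp : ∀ a ∈ Lm, ∀ b ∈ Lp, ⁅a, b⁆ ∈ Lz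
  lie_zm : ∀ a ∈ Lz, ∀ b ∈ Lm, ⁅a, b⁆ ∈ Lm
  lie_zp : ∀ a ∈ Lz, ∀ b ∈ Lp, ⁅a, b⁆ ∈ Lp
  lie_zz : ∀ a ∈ Lz, ∀ b ∈ Lz, ⁅a, b⁆ ∈ Lz

namespace IsShortGrading

theorem lie_mz (hL : IsShortGrading Lm Lz Lp) : ∀ a ∈ Lm, ∀ b ∈ Lz, ⁅a, b⁆ ∈ Lm :=
  fun a ha b hb => lie_skew a b ▸ neg_mem (hL.lie_zm b hb a ha)

theorem lie_pz (hL : IsShortGrading Lm Lz Lp) : ∀ a ∈ Lp, ∀ b ∈ Lz, ⁅a, b⁆ ∈ Lp :=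
  fun a ha b hb => lie_skew a b ▸ neg_mem (hL.lie_zp b hb a ha)

theorem lie_pm (hL : IsShortGrading Lm Lz Lp) : ∀ a ∈ Lp, ∀ b ∈ Lm, ⁅a, b⁆ ∈ Lz :=
  fun a ha b hb => lie_skew a b ▸ neg_mem (hL.lie_mp b hb a ha)

theorem lie_mem_gradedPiece (hL : IsShortGrading Lm Lz Lp) {i j : ℤ} {x y : L}
    (hx : x ∈ gradedPiece Lm Lz Lp i) (hy : y ∈ gradedPiece Lm Lz Lp j) :
    ⁅x, y⁆ ∈ gradedPiece Lm Lz Lp (i + j) := by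
  rcases mem_gradedPiece hx with ⟨rfl, hx'⟩ | ⟨rfl, hx'⟩ | ⟨rfl, hx'⟩ | rfl <;>
  rcases mem_gradedPiece hy with ⟨rfl, hy'⟩ | ⟨rfl, hy'⟩ | ⟨rfl, hy'⟩ | rfl <;>
  first
  | simp only [zero_lie, lie_zero, zero_mem]
  | norm_num [gradedPiece, hx', hy', hL.lie_mm, hL.lie_pp, hL.lie_mp, hL.lie_zm, hL.lie_zp,
      hL.lie_zz, hL.lie_mz, hL.lie_pz, hL.lie_pm]

end IsShortGrading

theorem exists_skew_form_on_degree_zero (hLz : Lz = span R {x | ∃ a ∈ Lm, ∃ b ∈ Lp, x = ⁅a, b⁆})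
    (B : L →ₗ[R] L →ₗ[R] R) (hB : ∀ a ∈ Lm, ∀ c ∈ Lm, ∀ b ∈ Lp, ∀ d ∈ Lp,
      B ⁅a, ⁅c, d⁆⁆ b + B a ⁅b, ⁅c, d⁆⁆ = B ⁅⁅a, b⁆, c⁆ d + B c ⁅⁅a, b⁆, d⁆) :
    ∃ C : Lz →ₗ[R] Lz →ₗ[R] R,
      (∀ a ∈ Lm, ∀ b ∈ Lp, ∀ (hab : ⁅a, b⁆ ∈ Lz) (z : Lz),
        C ⟨⁅a, b⁆, hab⟩ z = B ⁅a, (z : L)⁆ b + B a ⁅b, (z : L)⁆) ∧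
      ∀ x y, C x y = -C y x := by
  obtain ⟨C, hC, hskew⟩ := exists_skew_form_on_span (S := Lz)
    (fun q : Lm × Lp => ⁅(q.1 : L), (q.2 : L)⁆)
    (fun q => B.flip q.2 ∘ₗ LieAlgebra.ad R L q.1 + B q.1 ∘ₗ LieAlgebra.ad R L q.2)
    (by
      rintro ⟨⟨a, ha⟩, ⟨b, hb⟩⟩ ⟨⟨c, hc⟩, ⟨d, hd⟩⟩
      simp only [LinearMap.add_apply, LinearMap.comp_apply, LieAlgebra.ad_apply,
        LinearMap.flip_apply, hB a ha c hc b hb d hd]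
      rw [← lie_skew ⁅a, b⁆ c, ← lie_skew ⁅a, b⁆ d, map_neg, LinearMap.neg_apply, map_neg]
      ring)
    (by
      rw [hLz]; congr 1; ext x
      simp [eq_comm])
  exact ⟨C, fun a ha b hb hab z => by simpa using hC (⟨a, ha⟩, ⟨b, hb⟩) hab z, hskew⟩

variable {ψ : L →ₗ[R] L →ₗ[R] R}

theorem cyclicSum_eq_zero_of_mzp (hskew : ∀ x y, ψ x y = -ψ y x)
    (hlie : ∀ a ∈ Lm, ∀ b ∈ Lp, ∀ z ∈ Lz, ψ ⁅a, b⁆ z = ψ ⁅a, z⁆ b + ψ a ⁅b, z⁆)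
    {a w b : L} (ha : a ∈ Lm) (hw : w ∈ Lz) (hb : b ∈ Lp) : cyclicSum ψ a w b = 0 := by
  rw [cyclicSum, ← lie_skew b a, ← lie_skew w b, map_neg, LinearMap.neg_apply, map_neg,
    LinearMap.neg_apply, hlie a ha b hb w hw, hskew ⁅b, w⁆]
  ring

theorem cyclicSum_eq_zero_of_zzz (hL : IsShortGrading Lm Lz Lp)
    (hLz : Lz = span R {x | ∃ a ∈ Lm, ∃ b ∈ Lp, x = ⁅a, b⁆}) (hskew : ∀ x y, ψ x y = -ψ y x)
    (hlie : ∀ a ∈ Lm, ∀ b ∈ Lp, ∀ z ∈ Lz, ψ ⁅a, b⁆ z = ψ ⁅a, z⁆ b + ψ a ⁅b, z⁆)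
    {u v w : L} (hu : u ∈ Lz) (hv : v ∈ Lz) (hw : w ∈ Lz) : cyclicSum ψ u v w = 0 := by
  rw [← cyclicSum_rotate]
  refine cyclicSum_eq_zero_of_mem_span (hLz ▸ hw) ?_
  rintro _ ⟨a, ha, b, hb, rfl⟩
  have key : ∀ z ∈ Lz, ∀ y ∈ Lz, ψ ⁅⁅a, b⁆, z⁆ y =
      ψ ⁅⁅a, z⁆, y⁆ b + ψ ⁅a, z⁆ ⁅b, y⁆ + ψ ⁅a, y⁆ ⁅b, z⁆ + ψ a ⁅⁅b, z⁆, y⁆ := by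
    intro z hz y hy
    rw [lie_lie, ← lie_skew b ⁅a, z⁆, sub_neg_eq_add, add_comm, map_add, LinearMap.add_apply,
      hlie _ (hL.lie_mz a ha z hz) b hb y hy, hlie a ha _ (hL.lie_pz b hb z hz) y hy]
    ring
  have jacobi : ∀ c : L, ⁅c, ⁅u, v⁆⁆ = ⁅⁅c, u⁆, v⁆ - ⁅⁅c, v⁆, u⁆ := fun c => by
    rw [leibniz_lie, ← lie_skew u ⁅c, v⁆, sub_eq_add_neg]
  calc cyclicSum ψ ⁅a, b⁆ u v = ψ ⁅⁅a, b⁆, u⁆ v - ψ ⁅⁅a, b⁆, v⁆ u - ψ ⁅a, b⁆ ⁅u, v⁆ := by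
        rw [cyclicSum, hskew ⁅u, v⁆, ← lie_skew ⁅a, b⁆ v, map_neg, LinearMap.neg_apply]; ring
    _ = 0 := by
        rw [key u hu v hv, key v hv u hu, hlie a ha b hb _ (hL.lie_zz u hu v hv), jacobi a,
          jacobi b, map_sub, map_sub, LinearMap.sub_apply]
        ring

theorem IsDegreeZeroSkewForm.cyclicSum_eq_zero (hψ : IsDegreeZeroSkewForm Lm Lz Lp ψ)
    (hL : IsShortGrading Lm Lz Lp) (hLz : Lz = span R {x | ∃ a ∈ Lm, ∃ b ∈ Lp, x = ⁅a, b⁆})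
    (hspan : Lm ⊔ Lz ⊔ Lp = ⊤)
    (hlie : ∀ a ∈ Lm, ∀ b ∈ Lp, ∀ z ∈ Lz, ψ ⁅a, b⁆ z = ψ ⁅a, z⁆ b + ψ a ⁅b, z⁆)
    (x y z : L) : cyclicSum ψ x y z = 0 := by
  refine cyclicSum_eq_zero_of_span_eq_top (span_gradedPieces_eq_top hspan) ?_ x y z
  simp only [mem_iUnion₂, mem_insert_iff, mem_singleton_iff, SetLike.mem_coe]
  rintro x ⟨i, hi, hx⟩ y ⟨j, hj, hy⟩ z ⟨k, hk, hz⟩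
  by_cases hijk : i + j + k = 0
  · obtain ⟨rfl, rfl, rfl⟩ | ⟨rfl, rfl, rfl⟩ | ⟨rfl, rfl, rfl⟩ | ⟨rfl, rfl, rfl⟩ |
        ⟨rfl, rfl, rfl⟩ | ⟨rfl, rfl, rfl⟩ | ⟨rfl, rfl, rfl⟩ :
        (i = 0 ∧ j = 0 ∧ k = 0) ∨ (i = -2 ∧ j = 0 ∧ k = 2) ∨ (i = 0 ∧ j = 2 ∧ k = -2) ∨
        (i = 2 ∧ j = -2 ∧ k = 0) ∨ (i = 0 ∧ j = -2 ∧ k = 2) ∨ (i = -2 ∧ j = 2 ∧ k = 0) ∨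
        (i = 2 ∧ j = 0 ∧ k = -2) := by
      rcases hi with rfl | rfl | rfl <;> rcases hj with rfl | rfl | rfl <;>
        rcases hk with rfl | rfl | rfl <;> omega
    all_goals simp only [gradedPiece_neg_two, gradedPiece_zero, gradedPiece_two] at hx hy hz
    · exact cyclicSum_eq_zero_of_zzz hL hLz hψ.skew hlie hx hy hz
    · exact cyclicSum_eq_zero_of_mzp hψ.skew hlie hx hy hz
    · rw [← cyclicSum_rotate]; exact cyclicSum_eq_zero_of_mzp hψ.skew hlie hz hx hy
    · rw [cyclicSum_rotate]; exact cyclicSum_eq_zero_of_mzp hψ.skew hlie hy hz hx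
    · rw [cyclicSum_swap, cyclicSum_eq_zero_of_mzp hψ.skew hlie hy hx hz, neg_zero]
    · rw [← cyclicSum_rotate, cyclicSum_swap,
        cyclicSum_eq_zero_of_mzp hψ.skew hlie hx hz hy, neg_zero]
    · rw [cyclicSum_rotate, cyclicSum_swap,
        cyclicSum_eq_zero_of_mzp hψ.skew hlie hz hy hx, neg_zero]
  · exact cyclicSum_eq_zero_of_add_ne_zero hL.lie_mem_gradedPiece
      hψ.apply_eq_zero_of_add_ne_zero hijk hx hy hz

theorem IsDegreeZeroSkewForm.ext_of_cyclicSum_eq_zero (hL : IsShortGrading Lm Lz Lp)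
    (hLz : Lz = span R {x | ∃ a ∈ Lm, ∃ b ∈ Lp, x = ⁅a, b⁆}) (hspan : Lm ⊔ Lz ⊔ Lp = ⊤)
    {ψ₁ ψ₂ : L →ₗ[R] L →ₗ[R] R} (h₁ : IsDegreeZeroSkewForm Lm Lz Lp ψ₁)
    (h₂ : IsDegreeZeroSkewForm Lm Lz Lp ψ₂) (hc₁ : ∀ x y z, cyclicSum ψ₁ x y z = 0)
    (hc₂ : ∀ x y z, cyclicSum ψ₂ x y z = 0) (hmp : ∀ a ∈ Lm, ∀ b ∈ Lp, ψ₁ a b = ψ₂ a b) :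
    ψ₁ = ψ₂ := by
  have hzz : ∀ w ∈ Lz, ∀ z ∈ Lz, ψ₁ w z = ψ₂ w z := by
    intro w hw z hz
    suffices Lz ≤ LinearMap.ker ((ψ₁ - ψ₂).flip z) by simpa [sub_eq_zero] using this hw
    rw [hLz, span_le]
    rintro _ ⟨a, ha, b, hb, rfl⟩
    simp [apply_lie_eq_of_cyclicSum_eq_zero h₁.skew (hc₁ a b z),
      apply_lie_eq_of_cyclicSum_eq_zero h₂.skew (hc₂ a b z),
      hmp _ (hL.lie_mz a ha z hz) b hb, hmp a ha _ (hL.lie_pz b hb z hz)]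
  have hs := span_gradedPieces_eq_top hspan
  refine LinearMap.ext_on hs fun x hx => LinearMap.ext_on hs fun y hy => ?_
  simp only [mem_iUnion₂, mem_insert_iff, mem_singleton_iff, SetLike.mem_coe] at hx hy
  obtain ⟨i, hi, hx⟩ := hx
  obtain ⟨j, hj, hy⟩ := hy
  by_cases hij : i + j = 0
  · obtain ⟨rfl, rfl⟩ | ⟨rfl, rfl⟩ | ⟨rfl, rfl⟩ :
        (i = -2 ∧ j = 2) ∨ (i = 0 ∧ j = 0) ∨ (i = 2 ∧ j = -2) := by omega
    all_goals simp only [gradedPiece_neg_two, gradedPiece_zero, gradedPiece_two] at hx hy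
    · exact hmp x hx y hy
    · exact hzz x hx y hy
    · rw [h₁.skew, h₂.skew, hmp y hy x hx]
  · rw [h₁.apply_eq_zero_of_add_ne_zero hij hx hy, h₂.apply_eq_zero_of_add_ne_zero hij hx hy]

theorem extendForm_apply_lie (hL : IsShortGrading Lm Lz Lp)
    (h : ∀ x : L, ∃! t : Lm × Lz × Lp, x = t.1 + t.2.1 + t.2.2) (B : L →ₗ[R] L →ₗ[R] R)
    {C : Lz →ₗ[R] Lz →ₗ[R] R} (hC : ∀ a ∈ Lm, ∀ b ∈ Lp, ∀ (hab : ⁅a, b⁆ ∈ Lz) (z : Lz),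
      C ⟨⁅a, b⁆, hab⟩ z = B ⁅a, (z : L)⁆ b + B a ⁅b, (z : L)⁆) :
    ∀ a ∈ Lm, ∀ b ∈ Lp, ∀ z ∈ Lz, extendForm h B C ⁅a, b⁆ z =
      extendForm h B C ⁅a, z⁆ b + extendForm h B C a ⁅b, z⁆ := fun a ha b hb z hz => by
  rw [extendForm_zz h B C (hL.lie_mp a ha b hb) hz, hC a ha b hb,
    extendForm_mp h B C _ (hL.lie_mz a ha z hz) b hb,
    extendForm_mp h B C a ha _ (hL.lie_pz b hb z hz)]

end ShortGrading

theorem stmt0_general (F : Type*) [Field F]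
    (L : Type*) [LieRing L] [LieAlgebra F L]
    (Lm Lz Lp : Submodule F L)
    -- `L = L₋₂ ⊕ L₀ ⊕ L₂` (unique decomposition)
    (hdec : ∀ x : L, ∃! t : Lm × Lz × Lp, x = (t.1 : L) + (t.2.1 : L) + (t.2.2 : L))
    -- grading relations
    (hmm : ∀ a ∈ Lm, ∀ b ∈ Lm, ⁅a, b⁆ = 0)
    (hpp : ∀ a ∈ Lp, ∀ b ∈ Lp, ⁅a, b⁆ = 0)
    (hmp : ∀ a ∈ Lm, ∀ b ∈ Lp, ⁅a, b⁆ ∈ Lz)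
    (hzm : ∀ a ∈ Lz, ∀ b ∈ Lm, ⁅a, b⁆ ∈ Lm)
    (hzp : ∀ a ∈ Lz, ∀ b ∈ Lp, ⁅a, b⁆ ∈ Lp)
    (hzz : ∀ a ∈ Lz, ∀ b ∈ Lz, ⁅a, b⁆ ∈ Lz)
    -- `L₀ = [L₋₂, L₂]`
    (hz : Lz = Submodule.span F {x : L | ∃ a ∈ Lm, ∃ b ∈ Lp, x = ⁅a, b⁆})
    -- the given bilinear map (only its values on `Lm × Lp` matter)
    (B : L →ₗ[F] L →ₗ[F] F)
    -- identity (1)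
    (hB : ∀ a ∈ Lm, ∀ c ∈ Lm, ∀ b ∈ Lp, ∀ d ∈ Lp,
      B ⁅a, ⁅c, d⁆⁆ b + B a ⁅b, ⁅c, d⁆⁆ = B ⁅⁅a, b⁆, c⁆ d + B c ⁅⁅a, b⁆, d⁆) :
    ∃! ψ : L →ₗ[F] L →ₗ[F] F,
      (∀ x y : L, ψ x y = - ψ y x) ∧
      (∀ x y z : L, ψ ⁅x, y⁆ z + ψ ⁅y, z⁆ x + ψ ⁅z, x⁆ y = 0) ∧
      (∀ a ∈ Lm, ∀ b ∈ Lp, ψ a b = B a b) ∧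
      (∀ a ∈ Lm, ∀ b ∈ Lm, ψ a b = 0) ∧
      (∀ a ∈ Lp, ∀ b ∈ Lp, ψ a b = 0) ∧
      (∀ a ∈ Lz, ∀ b ∈ Lm, ψ a b = 0) ∧
      (∀ a ∈ Lz, ∀ b ∈ Lp, ψ a b = 0) := by
  have hL : IsShortGrading Lm Lz Lp := ⟨hmm, hpp, hmp, hzm, hzp, hzz⟩
  have hspan := sup_eq_top_of_forall_exists_eq_add fun x => (hdec x).exists
  obtain ⟨C, hC, hCskew⟩ := exists_skew_form_on_degree_zero hz B hB
  have hψ := isDegreeZeroSkewForm_extendForm hdec B C hCskew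
  have hcocycle := hψ.cyclicSum_eq_zero hL hz hspan (extendForm_apply_lie hL hdec B hC)
  have hψB := extendForm_mp hdec B C
  refine ⟨extendForm hdec B C, ⟨hψ.skew, hcocycle, hψB, hψ.mm, hψ.pp, hψ.zm, hψ.zp⟩, ?_⟩
  rintro ψ ⟨hskew, hcocycle', hψB', hmm', hpp', hzm', hzp'⟩
  refine IsDegreeZeroSkewForm.ext_of_cyclicSum_eq_zero hL hz hspan ⟨hskew, hmm', hpp', hzm', hzp'⟩
    hψ hcocycle' hcocycle fun a ha b hb => ?_
  rw [hψB' a ha b hb, hψB a ha b hb]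

/-- a bilinear map on `L₋₂ × L₂` satisfying identity (1) extends uniquely
to a 2-cocycle on the short Z-graded Lie algebra `L = L₋₂ ⊕ L₀ ⊕ L₂` with `L₀ = [L₋₂, L₂]`,
vanishing on components of nonzero total degree. -/
theorem stmt0 (F : Type*) [Field F] [CharZero F]
    (L : Type*) [LieRing L] [LieAlgebra F L]
    (Lm Lz Lp : Submodule F L)
    -- `L = L₋₂ ⊕ L₀ ⊕ L₂` (unique decomposition)
    (hdec : ∀ x : L, ∃! t : Lm × Lz × Lp, x = (t.1 : L) + (t.2.1 : L) + (t.2.2 : L))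
    -- grading relations
    (hmm : ∀ a ∈ Lm, ∀ b ∈ Lm, ⁅a, b⁆ = 0)
    (hpp : ∀ a ∈ Lp, ∀ b ∈ Lp, ⁅a, b⁆ = 0)
    (hmp : ∀ a ∈ Lm, ∀ b ∈ Lp, ⁅a, b⁆ ∈ Lz)
    (hzm : ∀ a ∈ Lz, ∀ b ∈ Lm, ⁅a, b⁆ ∈ Lm)
    (hzp : ∀ a ∈ Lz, ∀ b ∈ Lp, ⁅a, b⁆ ∈ Lp)
    (hzz : ∀ a ∈ Lz, ∀ b ∈ Lz, ⁅a, b⁆ ∈ Lz)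
    -- `L₀ = [L₋₂, L₂]`
    (hz : Lz = Submodule.span F {x : L | ∃ a ∈ Lm, ∃ b ∈ Lp, x = ⁅a, b⁆})
    -- the given bilinear map (only its values on `Lm × Lp` matter)
    (B : L →ₗ[F] L →ₗ[F] F)
    -- identity (1)
    (hB : ∀ a ∈ Lm, ∀ c ∈ Lm, ∀ b ∈ Lp, ∀ d ∈ Lp,
      B ⁅a, ⁅c, d⁆⁆ b + B a ⁅b, ⁅c, d⁆⁆ = B ⁅⁅a, b⁆, c⁆ d + B c ⁅⁅a, b⁆, d⁆) :
    ∃! ψ : L →ₗ[F] L →ₗ[F] F,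
      (∀ x y : L, ψ x y = - ψ y x) ∧
      (∀ x y z : L, ψ ⁅x, y⁆ z + ψ ⁅y, z⁆ x + ψ ⁅z, x⁆ y = 0) ∧
      (∀ a ∈ Lm, ∀ b ∈ Lp, ψ a b = B a b) ∧
      (∀ a ∈ Lm, ∀ b ∈ Lm, ψ a b = 0) ∧
      (∀ a ∈ Lp, ∀ b ∈ Lp, ψ a b = 0) ∧
      (∀ a ∈ Lz, ∀ b ∈ Lm, ψ a b = 0) ∧
      (∀ a ∈ Lz, ∀ b ∈ Lp, ψ a b = 0) :=
  stmt0_general F L Lm Lz Lp hdec hmm hpp hmp hzm hzp hzz hz B hB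
end

section
/- Let L = TKK(J) be the reduced Tits–Kantor–Koecher Lie algebra of a unital Jordan algebra J, with L = J⁻ ⊕ δ(J⁻,J⁺) ⊕ J⁺, and let (·|·) be a 2-cocycle on L satisfying (J⁺ | e⁻) = 0 where e is the identity of J. Then (J⁻ | e⁺) = 0. -/
/-- The Jordan triple product `{x,y,z} = (xy)z + x(yz) - y(xz)`. -/
def jtriple {F J : Type*} [Field F] [AddCommGroup J] [Module F J]
    (mul : J →ₗ[F] J →ₗ[F] J) (x y z : J) : J :=
  mul (mul x y) z + mul x (mul y z) - mul y (mul x z)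

/-- if `L` is the reduced TKK Lie algebra of a unital Jordan algebra `J`
and `(·|·)` is a 2-cocycle on `L` with `(J⁺ | e⁻) = 0`, then `(J⁻ | e⁺) = 0`. -/
theorem stmt1 (F : Type*) [Field F] [CharZero F]
    (J : Type*) [AddCommGroup J] [Module F J]
    (mul : J →ₗ[F] J →ₗ[F] J) (e : J)
    (hcomm : ∀ a b : J, mul a b = mul b a)
    (hjordan : ∀ a b : J, mul (mul (mul a a) b) a = mul (mul a a) (mul b a))
    (hunit : ∀ a : J, mul e a = a)
    (L : Type*) [LieRing L] [LieAlgebra F L]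
    -- the two copies `J⁺ = up(J)`, `J⁻ = dn(J)` of `J` inside `L`
    (up dn : J →ₗ[F] L)
    (hup : Function.Injective up) (hdn : Function.Injective dn)
    -- `[J⁺,J⁺] = [J⁻,J⁻] = 0`
    (hpp : ∀ a b : J, ⁅up a, up b⁆ = 0)
    (hmm : ∀ a b : J, ⁅dn a, dn b⁆ = 0)
    -- `[[a⁻,b⁺],x⁺] = 2{x,a,b}⁺` and `[[a⁻,b⁺],x⁻] = -2{x,b,a}⁻`
    (htp : ∀ a b x : J, ⁅⁅dn a, up b⁆, up x⁆ = (2 : F) • up (jtriple mul x a b))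
    (htm : ∀ a b x : J, ⁅⁅dn a, up b⁆, dn x⁆ = -((2 : F) • dn (jtriple mul x b a)))
    -- `L = J⁻ ⊕ δ(J⁻,J⁺) ⊕ J⁺`
    (hspan : Submodule.span F
      (Set.range up ∪ Set.range dn ∪ {x : L | ∃ a b : J, x = ⁅dn a, up b⁆}) = ⊤)
    -- the 2-cocycle
    (B : L →ₗ[F] L →ₗ[F] F)
    (hskew : ∀ x y : L, B x y = - B y x)
    (hcoc : ∀ x y z : L, B ⁅x, y⁆ z + B ⁅y, z⁆ x + B ⁅z, x⁆ y = 0)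
    -- `(J⁺ | e⁻) = 0`
    (hJpe : ∀ a : J, B (up a) (dn e) = 0) :
    ∀ a : J, B (dn a) (up e) = 0 := by
  intro a
  have hme : ∀ x : J, mul x e = x := fun x => (hcomm x e).trans (hunit x)
  have j1 : jtriple mul e a e = a := by simp [jtriple, hunit, hme]
  have j2 : jtriple mul e e a = a := by simp [jtriple, hunit, hme]
  have j3 : jtriple mul e e e = e := by simp [jtriple, hunit, hme]
  have j4 : jtriple mul a e e = a := by simp [jtriple, hunit, hme]
  have h1 := htp a e e; rw [j1] at h1
  have h2 := htm a e e; rw [j2] at h2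
  have h3 := htp e e e; rw [j3] at h3
  have h4 := htm e e a; rw [j4] at h4
  have c1 := hcoc ⁅dn a, up e⁆ (up e) (dn e)
  have c2 := hcoc (dn a) (up e) ⁅dn e, up e⁆
  have e1 : ⁅up e, dn e⁆ = -⁅dn e, up e⁆ := (lie_skew _ _).symm
  have e2 : ⁅dn e, ⁅dn a, up e⁆⁆ = (2:F) • dn a := by
    rw [← lie_skew, h2, neg_neg]
  have e3 : ⁅up e, ⁅dn e, up e⁆⁆ = -((2:F) • up e) := by
    rw [← lie_skew, h3]
  rw [h1, e1, e2] at c1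
  rw [e3, h4] at c2
  simp only [map_smul, map_neg, LinearMap.smul_apply, LinearMap.neg_apply,
    smul_eq_mul, hJpe a] at c1 c2
  have hs1 : B ⁅dn e, up e⁆ ⁅dn a, up e⁆ = - B ⁅dn a, up e⁆ ⁅dn e, up e⁆ := hskew _ _
  have hs2 : B (up e) (dn a) = - B (dn a) (up e) := hskew _ _
  have h2ne : (2:F) ≠ 0 := two_ne_zero
  linear_combination (1/2 : F) * c1 - (1/2 : F) * c2 + (1/2 : F) * hs1 - hs2
end

section
/- Let L be the reduced TKK Lie algebra of a unital Jordan algebra J, and (·|·) a 2-cocycle on L with (J⁻ | e⁺) = (J⁺ | e⁻) = 0. Define (a | b) := (a⁺ | b⁻) for a, b ∈ J. Then (a | b) + (b | a) = 0 for all a, b ∈ J. -/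
/-- for a 2-cocycle on the reduced TKK Lie algebra of a unital Jordan algebra
with `(J⁻ | e⁺) = (J⁺ | e⁻) = 0`, the form `(a|b) := (a⁺|b⁻)` is skew-symmetric:
`(a|b) + (b|a) = 0`. -/
theorem stmt2 (F : Type*) [Field F] [CharZero F]
    (J : Type*) [AddCommGroup J] [Module F J]
    (mul : J →ₗ[F] J →ₗ[F] J) (e : J)
    (hcomm : ∀ a b : J, mul a b = mul b a)
    (hjordan : ∀ a b : J, mul (mul (mul a a) b) a = mul (mul a a) (mul b a))
    (hunit : ∀ a : J, mul e a = a)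
    (L : Type*) [LieRing L] [LieAlgebra F L]
    -- the two copies `J⁺ = up(J)`, `J⁻ = dn(J)` of `J` inside `L`
    (up dn : J →ₗ[F] L)
    (hup : Function.Injective up) (hdn : Function.Injective dn)
    -- `[J⁺,J⁺] = [J⁻,J⁻] = 0`
    (hpp : ∀ a b : J, ⁅up a, up b⁆ = 0)
    (hmm : ∀ a b : J, ⁅dn a, dn b⁆ = 0)
    -- `[[a⁻,b⁺],x⁺] = 2{x,a,b}⁺` and `[[a⁻,b⁺],x⁻] = -2{x,b,a}⁻`
    (htp : ∀ a b x : J, ⁅⁅dn a, up b⁆, up x⁆ = (2 : F) • up (jtriple mul x a b))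
    (htm : ∀ a b x : J, ⁅⁅dn a, up b⁆, dn x⁆ = -((2 : F) • dn (jtriple mul x b a)))
    -- `L = J⁻ ⊕ δ(J⁻,J⁺) ⊕ J⁺`
    (hspan : Submodule.span F
      (Set.range up ∪ Set.range dn ∪ {x : L | ∃ a b : J, x = ⁅dn a, up b⁆}) = ⊤)
    -- the 2-cocycle
    (B : L →ₗ[F] L →ₗ[F] F)
    (hskew : ∀ x y : L, B x y = - B y x)
    (hcoc : ∀ x y z : L, B ⁅x, y⁆ z + B ⁅y, z⁆ x + B ⁅z, x⁆ y = 0)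
    -- `(J⁺ | e⁻) = 0`
    (hJpe : ∀ a : J, B (up a) (dn e) = 0)
    -- `(J⁻ | e⁺) = 0`
    (hJme : ∀ a : J, B (dn a) (up e) = 0) :
    ∀ a b : J, B (up a) (dn b) + B (up b) (dn a) = 0 := by
  have hjae : ∀ a : J, jtriple mul e a e = a := by
    intro a
    simp [jtriple, hunit, hcomm a e]
  have hkey : ∀ a b : J, B ⁅dn e, up b⁆ ⁅dn e, up a⁆ = 2 * B (dn a) (up b) := by
    intro a b
    have h1 := hcoc ⁅dn e, up a⁆ (up b) (dn e)
    have h3 : ⁅dn e, ⁅dn e, up a⁆⁆ = (2 : F) • dn a := by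
      rw [← lie_skew, htm, hjae]
      simp
    rw [htp, h3] at h1
    simp only [map_smul, LinearMap.smul_apply, smul_eq_mul, hJpe, mul_zero] at h1
    have h2 : ⁅up b, dn e⁆ = -⁅dn e, up b⁆ := by rw [← lie_skew]
    rw [h2] at h1
    simp only [map_neg, LinearMap.neg_apply] at h1
    linear_combination -h1
  intro a b
  have h1 := hkey a b
  have h2 := hkey b a
  have h3 := hskew ⁅dn e, up b⁆ ⁅dn e, up a⁆
  have h4 := hskew (up a) (dn b)
  have h5 := hskew (up b) (dn a)
  linear_combination h4 + h5 - (h3 - h1 - h2)/2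
end

section
/- Let L be the reduced TKK Lie algebra of a unital Jordan algebra J, and (·|·) a 2-cocycle on L with (J⁻|e⁺) = (J⁺|e⁻) = 0. Define (a|b) := (a⁺|b⁻). Then for all a, b, c ∈ J: (ab | c) + (bc | a) + (ac | b) = 0, i.e. the restriction is a cyclic cocycle on J. -/
/-- for a 2-cocycle on the reduced TKK Lie algebra of a unital Jordan algebra
with `(J⁻ | e⁺) = (J⁺ | e⁻) = 0`, the form `(a|b) := (a⁺|b⁻)` satisfies the cyclic cocycle
identity `(ab|c) + (bc|a) + (ac|b) = 0`. -/
theorem stmt3 (F : Type*) [Field F] [CharZero F]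
    (J : Type*) [AddCommGroup J] [Module F J]
    (mul : J →ₗ[F] J →ₗ[F] J) (e : J)
    (hcomm : ∀ a b : J, mul a b = mul b a)
    (hjordan : ∀ a b : J, mul (mul (mul a a) b) a = mul (mul a a) (mul b a))
    (hunit : ∀ a : J, mul e a = a)
    (L : Type*) [LieRing L] [LieAlgebra F L]
    -- the two copies `J⁺ = up(J)`, `J⁻ = dn(J)` of `J` inside `L`
    (up dn : J →ₗ[F] L)
    (hup : Function.Injective up) (hdn : Function.Injective dn)
    -- `[J⁺,J⁺] = [J⁻,J⁻] = 0`
    (hpp : ∀ a b : J, ⁅up a, up b⁆ = 0)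
    (hmm : ∀ a b : J, ⁅dn a, dn b⁆ = 0)
    -- `[[a⁻,b⁺],x⁺] = 2{x,a,b}⁺` and `[[a⁻,b⁺],x⁻] = -2{x,b,a}⁻`
    (htp : ∀ a b x : J, ⁅⁅dn a, up b⁆, up x⁆ = (2 : F) • up (jtriple mul x a b))
    (htm : ∀ a b x : J, ⁅⁅dn a, up b⁆, dn x⁆ = -((2 : F) • dn (jtriple mul x b a)))
    -- `L = J⁻ ⊕ δ(J⁻,J⁺) ⊕ J⁺`
    (hspan : Submodule.span F
      (Set.range up ∪ Set.range dn ∪ {x : L | ∃ a b : J, x = ⁅dn a, up b⁆}) = ⊤)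
    -- the 2-cocycle
    (B : L →ₗ[F] L →ₗ[F] F)
    (hskew : ∀ x y : L, B x y = - B y x)
    (hcoc : ∀ x y z : L, B ⁅x, y⁆ z + B ⁅y, z⁆ x + B ⁅z, x⁆ y = 0)
    -- `(J⁺ | e⁻) = 0`
    (hJpe : ∀ a : J, B (up a) (dn e) = 0)
    -- `(J⁻ | e⁺) = 0`
    (hJme : ∀ a : J, B (dn a) (up e) = 0) :
    ∀ a b c : J,
      B (up (mul a b)) (dn c) + B (up (mul b c)) (dn a) + B (up (mul a c)) (dn b) = 0 := by

  have hue : ∀ x : J, mul x e = x := fun x => (hcomm x e).trans (hunit x)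
  have t1 : ∀ x y : J, jtriple mul x y e = mul x y := by
    intro x y
    simp only [jtriple, hue, hunit]
    rw [hcomm y x]; abel
  have t2 : ∀ x y : J, jtriple mul x e y = mul x y := by
    intro x y
    simp only [jtriple, hue, hunit]; abel
  have t3 : ∀ x y : J, jtriple mul e x y = mul x y := by
    intro x y
    simp only [jtriple, hue, hunit]; abel
  have main : ∀ x y z : J,
      B (up (mul x y)) (dn z) + B (up (mul y z)) (dn x) - B (up y) (dn (mul x z)) = 0 := by
    intro x y z
    have h1 := hcoc ⁅dn x, up y⁆ (dn z) (up e)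
    have h2 := hcoc (dn x) (up y) ⁅dn z, up e⁆
    have e1 : ⁅⁅dn x, up y⁆, dn z⁆ = -((2:F) • dn (jtriple mul z y x)) := htm x y z
    have e2 : ⁅up e, ⁅dn x, up y⁆⁆ = -((2:F) • up (mul x y)) := by
      rw [← lie_skew, htp x y e, t3]
    have e4 : ⁅up y, ⁅dn z, up e⁆⁆ = -((2:F) • up (mul y z)) := by
      rw [← lie_skew, htp z e y, t1]
    have e5 : ⁅⁅dn z, up e⁆, dn x⁆ = -((2:F) • dn (mul x z)) := by
      rw [htm z e x, t2]
    rw [e1, e2] at h1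
    rw [e4, e5] at h2
    simp only [map_neg, map_smul, LinearMap.neg_apply, LinearMap.smul_apply, smul_eq_mul,
      hJme, mul_zero, neg_zero, zero_add] at h1 h2
    have hs1 := hskew ⁅dn x, up y⁆ ⁅dn z, up e⁆
    have hs2 := hskew (dn (mul x z)) (up y)
    linear_combination (-(1:F)/2) * h1 + (-(1:F)/2) * h2 + ((1:F)/2) * hs1 + (-(1:F)) * hs2
  have hw : ∀ x z : J, B (up x) (dn z) = - B (up z) (dn x) := by
    intro x z
    have hm := main x e z
    rw [hue, hunit] at hm
    have h0 : B (up e) (dn (mul x z)) = 0 := by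
      rw [hskew, hJme, neg_zero]
    linear_combination hm + h0
  intro a b c
  have hm := main a b c
  have hs := hw (mul a c) b
  linear_combination hm + hs
end

section
/- Let A be a commutative associative unital algebra with Jordan bracket [·,·] and derivation a' := [a,1], and let J = K(A) = A ⊕ Av be the Kantor double. For a, b, c ∈ A (all even), c·D(av, bv) = [c,ab] + (c·ab)', where D(x,y) = R(x)R(y) − R(y)R(x), and v·D(av,bv) = −(ab)'·v. Consequently Σᵢ D(aᵢv, bᵢv) = 0 if and only if Σᵢ aᵢbᵢ lies in the Poisson center Z_p = {u ∈ A : u' = 0 and (cu)' + [c,u] = 0 for all c ∈ A}. -/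
/-- Multiplication of the Kantor double `J = K(A) = A ⊕ Av` (with `A` purely even):
`(a + bv)(c + dv) = (ac + [b,d]) + (ad + bc)v`, encoding `a(dv) = (ad)v`,
`(bv)c = (bc)v` and `(bv)(dv) = [b,d]`. -/
def kmul {F A : Type*} [Field F] [CommRing A] [Algebra F A]
    (br : A →ₗ[F] A →ₗ[F] A) (x y : A × A) : A × A :=
  (x.1 * y.1 + br x.2 y.2, x.1 * y.2 + x.2 * y.1)

/-- The inner derivation `D(x,y) = R(x)R(y) - (-1)^{|x||y|} R(y)R(x)` of the Kantor double
for the two odd elements `x = av`, `y = bv` (so here it is `R(av)R(bv) + R(bv)R(av)`),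
with operators acting on the right: `z D(av,bv) = (z·av)·bv + (z·bv)·av`. -/
def kDoo {F A : Type*} [Field F] [CommRing A] [Algebra F A]
    (br : A →ₗ[F] A →ₗ[F] A) (a b : A) : A × A → A × A :=
  fun z => kmul br (kmul br z (0, a)) (0, b) + kmul br (kmul br z (0, b)) (0, a)

/-- in the Kantor double `J = K(A)` of a Jordan bracket, for even `a,b,c`:
`c·D(av,bv) = [c,ab] + (c·ab)'`, `v·D(av,bv) = -(ab)'·v`, and `Σᵢ D(aᵢv,bᵢv) = 0` iff
`Σᵢ aᵢbᵢ` lies in the Poisson center `Z_p = {u : u' = 0 ∧ ∀ c, (cu)' + [c,u] = 0}`. -/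
theorem stmt12 (F : Type*) [Field F] [CharZero F]
    (A : Type*) [CommRing A] [Algebra F A]
    (br : A →ₗ[F] A →ₗ[F] A)
    -- `[·,·]` is a Jordan bracket on `A` (all elements even)
    (halt : ∀ a : A, br a a = 0)
    (hjac : ∀ a b c : A, br (br a b) c + br (br b c) a + br (br c a) b = 0)
    (hleib : ∀ a b c : A, br (a * b) c = a * br b c + br a c * b + a * b * br c 1) :
    -- `c·D(av,bv) = [c,ab] + (c·ab)'`
    (∀ a b c : A, kDoo br a b (c, 0) = (br c (a * b) + br (c * (a * b)) 1, 0)) ∧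
    -- `v·D(av,bv) = -(ab)'·v`
    (∀ a b : A, kDoo br a b (0, 1) = (0, - br (a * b) 1)) ∧
    -- `Σᵢ D(aᵢv,bᵢv) = 0 ↔ Σᵢ aᵢbᵢ ∈ Z_p`
    (∀ (ι : Type) (s : Finset ι) (f g : ι → A),
      (∀ z : A × A, (∑ i ∈ s, kDoo br (f i) (g i) z) = 0) ↔
        (br (∑ i ∈ s, f i * g i) 1 = 0 ∧
          ∀ c : A, br (c * ∑ i ∈ s, f i * g i) 1 + br c (∑ i ∈ s, f i * g i) = 0)) := by
  have skew : ∀ a b : A, br a b + br b a = 0 := by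
    intro a b
    have h := halt (a + b)
    simp only [map_add, LinearMap.add_apply, halt a, halt b] at h
    linear_combination h
  have h11 : br (1 : A) 1 = 0 := halt 1
  have key : ∀ a b c : A, br (c*a) b + br (c*b) a = br c (a*b) + br (c*(a*b)) 1 := by
    intro a b c
    linear_combination hleib c a b + hleib c b a - hleib c (a*b) 1 + hleib a b c +
      (-c) * hleib a b 1 + c * skew a b - skew c (a*b) + a * skew b c + b * skew c a +
      (-2)*c*a*b*h11
  have key2 : ∀ d a b : A, br d a * b + br d b * a = br d (a*b) + a*b*br d 1 := by
    intro d a b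
    linear_combination b * skew d a + a * skew d b - skew d (a*b) + hleib a b d
  -- general evaluation of kDoo
  have keval : ∀ a b c d : A, kDoo br a b (c, d) =
      (br (c*a) b + br (c*b) a, br d a * b + br d b * a) := by
    intro a b c d
    simp only [kDoo, kmul, Prod.mk_add_mk, Prod.mk.injEq]
    constructor <;> ring_nf <;> simp [mul_comm]
  refine ⟨?_, ?_, ?_⟩
  · intro a b c
    rw [keval, key]
    simp [map_zero]
  · intro a b
    rw [keval]
    have : br (1:A) a * b + br 1 b * a = - br (a*b) 1 := by
      linear_combination b * skew 1 a + a * skew 1 b + hleib a b 1 + a*b*h11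
    simp [this, map_zero]
  · intro ι s f g
    constructor
    · intro h
      constructor
      · have h1 := congrArg Prod.snd (h (0, 1))
        simp only [keval, Prod.snd_sum] at h1
        have : ∀ i ∈ s, br (1:A) (f i) * g i + br 1 (g i) * f i = - br (f i * g i) 1 := by
          intro i _
          linear_combination g i * skew 1 (f i) + f i * skew 1 (g i) +
            hleib (f i) (g i) 1 + (f i)*(g i)*h11
        rw [Finset.sum_congr rfl this] at h1
        have ms : br (∑ i ∈ s, f i * g i) 1 = ∑ i ∈ s, br (f i * g i) 1 := by
          rw [map_sum, LinearMap.sum_apply]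
        rw [ms]
        simp only [Prod.snd_zero, Finset.sum_neg_distrib] at h1
        linear_combination -h1
      · intro c
        have h1 := congrArg Prod.fst (h (c, 0))
        simp only [keval, Prod.fst_sum] at h1
        have e : ∀ i ∈ s, br (c * f i) (g i) + br (c * g i) (f i) =
            br c (f i * g i) + br (c * (f i * g i)) 1 := fun i _ => key (f i) (g i) c
        rw [Finset.sum_congr rfl e, Finset.sum_add_distrib] at h1
        have ms1 : ∑ i ∈ s, br c (f i * g i) = br c (∑ i ∈ s, f i * g i) := (map_sum _ _ _).symm
        have ms2 : ∑ i ∈ s, br (c * (f i * g i)) 1 = br (c * ∑ i ∈ s, f i * g i) 1 := by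
          rw [Finset.mul_sum, map_sum, LinearMap.sum_apply]
        rw [ms1, ms2] at h1
        simp only [Prod.fst_zero] at h1
        linear_combination h1
    · rintro ⟨h1, h2⟩ ⟨c, d⟩
      have hcS := h2 c
      have hdS := h2 d
      have hdS1 : br (d * ∑ i ∈ s, f i * g i) 1 = br d 1 * ∑ i ∈ s, f i * g i := by
        linear_combination hleib d (∑ i ∈ s, f i * g i) 1 + d * h1 +
          d * (∑ i ∈ s, f i * g i) * h11
      simp only [keval, Prod.ext_iff, Prod.fst_sum, Prod.snd_sum, Prod.fst_zero, Prod.snd_zero]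
      constructor
      · have e : ∀ i ∈ s, br (c * f i) (g i) + br (c * g i) (f i) =
            br c (f i * g i) + br (c * (f i * g i)) 1 := fun i _ => key (f i) (g i) c
        rw [Finset.sum_congr rfl e, Finset.sum_add_distrib]
        have ms1 : ∑ i ∈ s, br c (f i * g i) = br c (∑ i ∈ s, f i * g i) := (map_sum _ _ _).symm
        have ms2 : ∑ i ∈ s, br (c * (f i * g i)) 1 = br (c * ∑ i ∈ s, f i * g i) 1 := by
          rw [Finset.mul_sum, map_sum, LinearMap.sum_apply]
        rw [ms1, ms2]
        linear_combination hcS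
      · have e : ∀ i ∈ s, br d (f i) * g i + br d (g i) * f i =
            br d (f i * g i) + (f i * g i) * br d 1 := fun i _ => key2 d (f i) (g i)
        rw [Finset.sum_congr rfl e, Finset.sum_add_distrib]
        have ms1 : ∑ i ∈ s, br d (f i * g i) = br d (∑ i ∈ s, f i * g i) := (map_sum _ _ _).symm
        rw [ms1, ← Finset.sum_mul]
        linear_combination hdS - hdS1
end

section
/- Let A be a commutative associative unital algebra with a Jordan bracket, Z_p its Poisson center, λ: A → F linear. Define on J = K(A) = A ⊕ Av the bilinear form (A|A)_λ = (Av|A)_λ = 0, (av|bv)_λ = λ(ab). Then (·|·)_λ is a cyclic cocycle on J, and it is a coboundary (i.e. of the form μ(D(x,y)) for a linear functional μ on Inder(J)) if and only if λ(Z_p) = 0. -/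
/-- A (super) cyclic cocycle on the Kantor double `J = A ⊕ Av`, recorded by its blocks
`Bee = (A|A)`, `Beo = (A|Av)`, `Boo = (Av|Av)` (with `(Av|A)` determined by super
skew-symmetry): super skew-symmetry together with the super cyclic cocycle identity
`(xy|z) + (-1)^{|x|(|y|+|z|)}(yz|x) + (-1)^{|y||z|}(xz|y) = 0` on homogeneous triples. -/
def IsKantorCyclicCocycle {F A : Type*} [Field F] [CommRing A] [Algebra F A]
    (br : A →ₗ[F] A →ₗ[F] A) (Bee Beo Boo : A →ₗ[F] A →ₗ[F] F) : Prop :=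
  (∀ a b : A, Bee a b = - Bee b a) ∧
  (∀ a b : A, Boo a b = Boo b a) ∧
  -- triple of even elements a, b, c
  (∀ a b c : A, Bee (a * b) c + Bee (b * c) a + Bee (a * c) b = 0) ∧
  -- triple a, b, cv
  (∀ a b c : A, Beo (a * b) c - Beo a (b * c) - Beo b (a * c) = 0) ∧
  -- triple av, bv, c
  (∀ a b c : A, Bee (br a b) c - Boo (b * c) a + Boo (a * c) b = 0) ∧
  -- triple av, bv, cv
  (∀ a b c : A, Beo (br a b) c + Beo (br b c) a - Beo (br a c) b = 0)

/-- `D(a,b) = R(a)R(b) - R(b)R(a)` for two even elements of the Kantor double. -/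
def kDee {F A : Type*} [Field F] [CommRing A] [Algebra F A]
    (br : A →ₗ[F] A →ₗ[F] A) (a b : A) : A × A → A × A :=
  fun z => kmul br (kmul br z (a, 0)) (b, 0) - kmul br (kmul br z (b, 0)) (a, 0)

/-- `D(a,bv) = R(a)R(bv) - R(bv)R(a)` for an even and an odd element. -/
def kDeo {F A : Type*} [Field F] [CommRing A] [Algebra F A]
    (br : A →ₗ[F] A →ₗ[F] A) (a b : A) : A × A → A × A :=
  fun z => kmul br (kmul br z (a, 0)) (0, b) - kmul br (kmul br z (0, b)) (a, 0)

/-- `Inder(K(A))`: the span of all inner derivations of the Kantor double. -/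
def kInder (F : Type*) {A : Type*} [Field F] [CommRing A] [Algebra F A]
    (br : A →ₗ[F] A →ₗ[F] A) : Submodule F (A × A → A × A) :=
  Submodule.span F ({f | ∃ a b : A, f = kDee br a b} ∪ {f | ∃ a b : A, f = kDeo br a b}
    ∪ {f | ∃ a b : A, f = kDoo br a b})

/-- A cyclic cocycle on the Kantor double (given by blocks `Bee`, `Beo`, `Boo`) is a
coboundary if it is of the form `(x|y) = μ(D(x,y))` for a linear functional `μ` on
`Inder(K(A))`. -/
def IsKantorCoboundary {F A : Type*} [Field F] [CommRing A] [Algebra F A]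
    (br : A →ₗ[F] A →ₗ[F] A) (Bee Beo Boo : A →ₗ[F] A →ₗ[F] F) : Prop :=
  ∃ μ : kInder F br →ₗ[F] F,
    (∀ a b : A, Bee a b = μ ⟨kDee br a b,
      Submodule.subset_span (Set.mem_union_left _ (Set.mem_union_left _ ⟨a, b, rfl⟩))⟩) ∧
    (∀ a b : A, Beo a b = μ ⟨kDeo br a b,
      Submodule.subset_span (Set.mem_union_left _ (Set.mem_union_right _ ⟨a, b, rfl⟩))⟩) ∧
    (∀ a b : A, Boo a b = μ ⟨kDoo br a b,
      Submodule.subset_span (Set.mem_union_right _ ⟨a, b, rfl⟩)⟩)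


/-!
The form `(·|·)_λ` is a cocycle by commutativity of `A` alone. If it is a coboundary `μ(D(x,y))`,
then `λ(u) = (uv|v)_λ = μ(D(uv,v))`, and `D(uv,v) = 0` for `u ∈ Z_p`. Conversely, every pair
`(T, u)` in the span of the pairs `(D(av,bv), ab)` and `(D(a,bv), 0)` satisfies
`[u,z] = u z' - (T(zv))_v`, so `T = 0` forces `u ∈ Z_p`, hence `λ(u) = 0`. Thus `T ↦ λ(u)` is a
well-defined linear functional on this span of operators, and over a field it extends to one on
all operators.
-/

/-- `u ∈ Z_p`, the Poisson center, with `a' = [a,1]`. -/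
def IsPoissonCentral {F A : Type*} [Field F] [CommRing A] [Algebra F A]
    (br : A →ₗ[F] A →ₗ[F] A) (u : A) : Prop :=
  br u 1 = 0 ∧ ∀ c : A, br (c * u) 1 + br c u = 0

theorem Submodule.exists_linearMap_apply_fst_eq {K V U W : Type*} [DivisionRing K]
    [AddCommGroup V] [Module K V] [AddCommGroup U] [Module K U] [AddCommGroup W] [Module K W]
    (g : Submodule K (V × U)) (φ : U →ₗ[K] W) (hg : ∀ x ∈ g, x.1 = 0 → φ x.2 = 0) :
    ∃ f : V →ₗ[K] W, ∀ x ∈ g, f x.1 = φ x.2 := by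
  set g' := g.map ((LinearMap.id : V →ₗ[K] V).prodMap φ)
  have hg' : ∀ y ∈ g', y.1 = 0 → y.2 = 0 := by
    rintro _ ⟨x, hx, rfl⟩ h
    exact hg x hx h
  obtain ⟨f, hf⟩ := LinearMap.exists_extend g'.toLinearPMap.toFun
  refine ⟨f, fun x hx => ?_⟩
  have hmem : (x.1, φ x.2) ∈ g'.toLinearPMap.graph := by
    rw [g'.toLinearPMap_graph_eq hg']
    exact ⟨x, hx, rfl⟩
  obtain ⟨y, hy₁, hy₂⟩ := (LinearPMap.mem_graph_iff _).mp hmem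
  simp only at hy₁ hy₂
  rw [← hy₁, ← hy₂]
  exact LinearMap.congr_fun hf y

section KantorDouble

variable {F A : Type*} [Field F] [CommRing A] [Algebra F A] (br : A →ₗ[F] A →ₗ[F] A)

theorem kDee_eq_zero (a b : A) : kDee br a b = 0 := by
  funext z
  simp only [kDee, kmul, Pi.zero_apply, Prod.ext_iff]
  constructor <;> simp <;> ring

@[simp]
theorem kDoo_apply (a b z₁ z₂ : A) :
    kDoo br a b (z₁, z₂) = (br (z₁ * a) b + br (z₁ * b) a, br z₂ a * b + br z₂ b * a) := by
  simp [kDoo, kmul]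

@[simp]
theorem kDeo_apply (a b z₁ z₂ : A) :
    kDeo br a b (z₁, z₂) = (br (z₂ * a) b - br z₂ b * a, 0) := by
  simp [kDeo, kmul]
  ring

theorem isKantorCyclicCocycle_mul_compr₂ (lam : A →ₗ[F] F) :
    IsKantorCyclicCocycle br 0 0 ((LinearMap.mul F A).compr₂ lam) := by
  refine ⟨by simp, fun a b => by simp [mul_comm], by simp, by simp, fun a b c => ?_, by simp⟩
  simp only [LinearMap.zero_apply, LinearMap.compr₂_apply, LinearMap.mul_apply']
  rw [show b * c * a = a * c * b by ring, zero_sub, neg_add_cancel]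

/-- The span of the pairs `(D(av,bv), ab)` and `(D(a,bv), 0)`: `μ` witnesses that `(·|·)_λ` is a
coboundary as soon as `μ T = λ u` for every `(T, u)` in it. -/
def kInderGraph : Submodule F ((A × A → A × A) × A) :=
  Submodule.span F ({p | ∃ a b : A, p = (kDoo br a b, a * b)} ∪
    {p | ∃ a b : A, p = (kDeo br a b, 0)})

variable {br}

theorem IsKantorCoboundary.eq_zero_of_kDoo_eq_zero {Bee Beo Boo : A →ₗ[F] A →ₗ[F] F}
    (hB : IsKantorCoboundary br Bee Beo Boo) {a b : A} (hab : kDoo br a b = 0) : Boo a b = 0 := by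
  obtain ⟨μ, -, -, hBoo⟩ := hB
  rw [hBoo]
  convert map_zero μ
  exact Subtype.ext hab

theorem br_mul_one (halt : br.IsAlt)
    (hleib : ∀ a b c : A, br (a * b) c = a * br b c + br a c * b + a * b * br c 1) (x y : A) :
    br (x * y) 1 = x * br y 1 + br x 1 * y := by
  rw [hleib, halt.self_eq_zero]
  ring

theorem kDoo_one_eq_zero_of_isPoissonCentral (halt : br.IsAlt)
    (hleib : ∀ a b c : A, br (a * b) c = a * br b c + br a c * b + a * b * br c 1)
    {u : A} (hu : IsPoissonCentral br u) : kDoo br u 1 = 0 := by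
  obtain ⟨hu₁, hu₂⟩ := hu
  funext ⟨z₁, z₂⟩
  have hz : br z₂ u = -(br z₂ 1 * u) := by
    linear_combination hu₂ z₂ - br_mul_one halt hleib z₂ u - z₂ * hu₁
  simp only [kDoo_apply, mul_one, Pi.zero_apply, Prod.ext_iff, Prod.fst_zero, Prod.snd_zero]
  exact ⟨hu₂ z₁, by rw [hz]; ring⟩

theorem br_snd_eq_of_mem_kInderGraph (halt : br.IsAlt)
    (hleib : ∀ a b c : A, br (a * b) c = a * br b c + br a c * b + a * b * br c 1)
    {x : (A × A → A × A) × A} (hx : x ∈ kInderGraph br) (z : A) :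
    br x.2 z = x.2 * br z 1 - (x.1 (0, z)).2 := by
  induction hx using Submodule.span_induction generalizing z with
  | mem x hx =>
    rcases hx with ⟨a, b, rfl⟩ | ⟨a, b, rfl⟩
    · simp only [kDoo_apply]
      linear_combination hleib a b z - b * halt.neg z a - a * halt.neg z b
    · simp
  | zero => simp
  | add x y _ _ hx hy =>
    simp only [Prod.fst_add, Prod.snd_add, Pi.add_apply, map_add, LinearMap.add_apply]
    linear_combination hx z + hy z
  | smul c x _ hx =>
    simp only [Prod.smul_fst, Prod.smul_snd, Pi.smul_apply, map_smul, LinearMap.smul_apply,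
      smul_mul_assoc, hx z, smul_sub]

theorem isPoissonCentral_of_mem_kInderGraph (halt : br.IsAlt)
    (hleib : ∀ a b c : A, br (a * b) c = a * br b c + br a c * b + a * b * br c 1)
    {x : (A × A → A × A) × A} (hx : x ∈ kInderGraph br) (hx₁ : x.1 = 0) :
    IsPoissonCentral br x.2 := by
  have hbr : ∀ z, br x.2 z = x.2 * br z 1 := fun z => by
    simpa [hx₁] using br_snd_eq_of_mem_kInderGraph halt hleib hx z
  have hu₁ : br x.2 1 = 0 := by rw [hbr, halt.self_eq_zero, mul_zero]
  refine ⟨hu₁, fun c => ?_⟩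
  linear_combination br_mul_one halt hleib c x.2 + c * hu₁ - halt.neg c x.2 - hbr c

theorem isKantorCoboundary_of_forall_isPoissonCentral (halt : br.IsAlt)
    (hleib : ∀ a b c : A, br (a * b) c = a * br b c + br a c * b + a * b * br c 1)
    {lam : A →ₗ[F] F} (hlam : ∀ u, IsPoissonCentral br u → lam u = 0) :
    IsKantorCoboundary br 0 0 ((LinearMap.mul F A).compr₂ lam) := by
  obtain ⟨μ, hμ⟩ := (kInderGraph br).exists_linearMap_apply_fst_eq lam
    fun x hx hx₁ => hlam _ (isPoissonCentral_of_mem_kInderGraph halt hleib hx hx₁)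
  refine ⟨μ.comp (kInder F br).subtype, fun a b => ?_, fun a b => ?_, fun a b => ?_⟩
  · simp [kDee_eq_zero]
  · simpa using (hμ _ (Submodule.subset_span (Or.inr ⟨a, b, rfl⟩))).symm
  · simpa using (hμ _ (Submodule.subset_span (Or.inl ⟨a, b, rfl⟩))).symm

end KantorDouble

theorem stmt13_general (F : Type*) [Field F]
    (A : Type*) [CommRing A] [Algebra F A]
    (br : A →ₗ[F] A →ₗ[F] A)
    -- `[·,·]` is a Jordan bracket on `A` (all elements even)
    (halt : ∀ a : A, br a a = 0)
    (hleib : ∀ a b c : A, br (a * b) c = a * br b c + br a c * b + a * b * br c 1)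
    (lam : A →ₗ[F] F) :
    IsKantorCyclicCocycle br 0 0 ((LinearMap.mul F A).compr₂ lam) ∧
    (IsKantorCoboundary br 0 0 ((LinearMap.mul F A).compr₂ lam) ↔
      ∀ u : A, (br u 1 = 0 ∧ ∀ c : A, br (c * u) 1 + br c u = 0) → lam u = 0) := by
  refine ⟨isKantorCyclicCocycle_mul_compr₂ br lam, fun hB u hu => ?_,
    isKantorCoboundary_of_forall_isPoissonCentral halt hleib⟩
  simpa using hB.eq_zero_of_kDoo_eq_zero (kDoo_one_eq_zero_of_isPoissonCentral halt hleib hu)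

/-- for a linear functional `λ : A → F`, the form on `J = K(A)` given by
`(A|A)_λ = (Av|A)_λ = 0`, `(av|bv)_λ = λ(ab)` is a cyclic cocycle on `J`, and it is a
coboundary iff `λ` vanishes on the Poisson center `Z_p`. -/
theorem stmt13 (F : Type*) [Field F] [CharZero F]
    (A : Type*) [CommRing A] [Algebra F A]
    (br : A →ₗ[F] A →ₗ[F] A)
    -- `[·,·]` is a Jordan bracket on `A` (all elements even)
    (halt : ∀ a : A, br a a = 0)
    (hjac : ∀ a b c : A, br (br a b) c + br (br b c) a + br (br c a) b = 0)
    (hleib : ∀ a b c : A, br (a * b) c = a * br b c + br a c * b + a * b * br c 1)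
    (lam : A →ₗ[F] F) :
    IsKantorCyclicCocycle br 0 0 ((LinearMap.mul F A).compr₂ lam) ∧
    (IsKantorCoboundary br 0 0 ((LinearMap.mul F A).compr₂ lam) ↔
      ∀ u : A, (br u 1 = 0 ∧ ∀ c : A, br (c * u) 1 + br c u = 0) → lam u = 0) :=
  stmt13_general F A br halt hleib lam
end

section
/- Let A be a commutative associative unital algebra with a Jordan bracket, J = K(A) = A ⊕ Av its Kantor double, and (·|·) a cyclic cocycle on J. Then for all a, b ∈ A: ([a,b] | c) = (a' | bc) − (b' | ac), where x' = [x,1]. -/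
/-- for a cyclic cocycle `(·|·)` on the Kantor double `J = K(A)` of a
Jordan bracket, its restriction to `A × A` satisfies
`([a,b] | c) = (a' | bc) - (b' | ac)` where `x' = [x,1]`. -/
theorem stmt14 (F : Type*) [Field F] [CharZero F]
    (A : Type*) [CommRing A] [Algebra F A]
    (br : A →ₗ[F] A →ₗ[F] A)
    -- `[·,·]` is a Jordan bracket on `A` (all elements even)
    (halt : ∀ a : A, br a a = 0)
    (hjac : ∀ a b c : A, br (br a b) c + br (br b c) a + br (br c a) b = 0)
    (hleib : ∀ a b c : A, br (a * b) c = a * br b c + br a c * b + a * b * br c 1)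
    (Bee Beo Boo : A →ₗ[F] A →ₗ[F] F)
    (hcoc : IsKantorCyclicCocycle br Bee Beo Boo) :
    ∀ a b c : A, Bee (br a b) c = Bee (br a 1) (b * c) - Bee (br b 1) (a * c) := by
  obtain ⟨h1, h2, h3, h4, h5, h6⟩ := hcoc
  intro a b c
  have ha := h5 a 1 (b * c)
  have hb := h5 b 1 (a * c)
  have hab := h5 a b c
  rw [mul_comm a (b * c)] at ha
  rw [mul_comm b (a * c)] at hb
  have e1 : b * c * a = a * c * b := by ring
  rw [e1] at ha; simp only [one_mul] at ha hb
  linear_combination hab - ha + hb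
end

section
/- Let A be a commutative associative unital algebra with derivation ', bracket [a,b] = a'b − ab', and suppose 1 ∈ A'·A. If (·|·) is a bracket cyclic cocycle on A (skew-symmetric, cyclic: (ab|c)+(bc|a)+(ac|b)=0, and ([a,b]|c) = (a'|bc) − (b'|ac)), then (a | b'c) = (b | a'c) for all a, b, c ∈ A, and there exists a linear functional λ: A → F vanishing on A' such that (a|b) = λ(a'b) for all a, b ∈ A. -/
/-- for a commutative associative unital algebra `A` with derivation `'`,
vector-type bracket `[a,b] = a'b - ab'` and `1 ∈ A'·A`, every bracket cyclic cocycle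
satisfies `(a|b'c) = (b|a'c)` and has the form `(a|b) = λ(a'b)` for some linear
functional `λ` vanishing on `A'`. -/
theorem stmt18 (F : Type*) [Field F] [CharZero F]
    (A : Type*) [CommRing A] [Algebra F A]
    (d : A →ₗ[F] A) (hd : ∀ a b : A, d (a * b) = d a * b + a * d b)
    -- `1 ∈ A'·A`
    (hone : (1 : A) ∈ Submodule.span F {y : A | ∃ c x : A, y = d c * x})
    -- a bracket cyclic cocycle on `A`
    (φ : A →ₗ[F] A →ₗ[F] F)
    (hskew : ∀ a b : A, φ a b = - φ b a)
    (hcyc : ∀ a b c : A, φ (a * b) c + φ (b * c) a + φ (a * c) b = 0)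
    (hbr : ∀ a b c : A, φ (d a * b - a * d b) c = φ (d a) (b * c) - φ (d b) (a * c)) :
    (∀ a b c : A, φ a (d b * c) = φ b (d a * c)) ∧
    ∃ lam : A →ₗ[F] F, (∀ a : A, lam (d a) = 0) ∧ ∀ a b : A, φ a b = lam (d a * b) := by
  -- `φ a 1 = 0`
  have hone' : ∀ a : A, φ a 1 = 0 := by
    intro a
    have h := hcyc a 1 1
    simp only [mul_one, one_mul] at h
    linear_combination h - hskew 1 a
  -- key identity
  have key : ∀ a b c : A, φ a (d b * c) = φ b (d a * c) := by
    intro a b c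
    have h1 := hbr a b c
    rw [map_sub, LinearMap.sub_apply] at h1
    have h2 := hcyc (d a) b c
    have h3 := hcyc a (d b) c
    linear_combination -h1 + h2 - h3 - hskew (b * c) (d a) - hskew (d a * c) b
      + hskew (d b * c) a + hskew (a * c) (d b)
  refine ⟨key, ?_⟩
  obtain ⟨n, f, g, hsum⟩ := Submodule.mem_span_set'.mp hone
  choose c x hcx using fun i => (g i).2
  refine ⟨∑ i, f i • ((φ (c i)).comp (LinearMap.mulLeft F (x i))), ?_, ?_⟩
  · intro a
    have : ∀ i, φ (c i) (x i * d a) = φ a (d (c i) * x i) := by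
      intro i
      rw [mul_comm]
      exact key (c i) a (x i)
    simp only [LinearMap.sum_apply, LinearMap.smul_apply, LinearMap.comp_apply,
      LinearMap.mulLeft_apply, this, smul_eq_mul]
    have : ∑ i, f i * φ a (d (c i) * x i) = φ a (∑ i, f i • (d (c i) * x i)) := by
      rw [map_sum]
      simp [smul_eq_mul]
    rw [this]
    have hs : (∑ i, f i • (d (c i) * x i)) = 1 := by
      rw [← hsum]
      exact Finset.sum_congr rfl fun i _ => by rw [← hcx i]
    rw [hs, hone']
  · intro a b
    have hk : ∀ i, φ (c i) (x i * (d a * b)) = φ a ((d (c i) * x i) * b) := by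
      intro i
      have : x i * (d a * b) = d a * (x i * b) := by ring
      rw [this, key (c i) a (x i * b), mul_assoc]
    simp only [LinearMap.sum_apply, LinearMap.smul_apply, LinearMap.comp_apply,
      LinearMap.mulLeft_apply, hk, smul_eq_mul]
    have : ∑ i, f i * φ a ((d (c i) * x i) * b) = φ a ((∑ i, f i • (d (c i) * x i)) * b) := by
      rw [Finset.sum_mul, map_sum]
      simp [smul_mul_assoc, smul_eq_mul]
    rw [this]
    have hs : (∑ i, f i • (d (c i) * x i)) = 1 := by
      rw [← hsum]
      exact Finset.sum_congr rfl fun i _ => by rw [← hcx i]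
    rw [hs, one_mul]
end

section
/- Let A be a commutative associative unital algebra with derivation ' and vector-type bracket [a,b] = a'b − ab', with 1 ∈ A'·A. Then the Poisson center Z_p = {u : u' = 0 and (cu)' + [c,u] = 0 for all c ∈ A} is zero. -/
/-- for a commutative associative unital algebra `A` with derivation `'`,
vector-type bracket `[a,b] = a'b - ab'` and `1 ∈ A'·A`, the Poisson center
`Z_p = {u : u' = 0 ∧ ∀ c, (cu)' + [c,u] = 0}` is zero. -/
theorem stmt19 (F : Type*) [Field F] [CharZero F]
    (A : Type*) [CommRing A] [Algebra F A]
    (d : A →ₗ[F] A) (hd : ∀ a b : A, d (a * b) = d a * b + a * d b)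
    -- `1 ∈ A'·A`
    (hone : (1 : A) ∈ Submodule.span F {y : A | ∃ c x : A, y = d c * x}) :
    ∀ u : A, (d u = 0 ∧ ∀ c : A, d (c * u) + (d c * u - c * d u) = 0) → u = 0 := by
  rintro u ⟨hu, hc⟩
  have key : ∀ c : A, d c * u = 0 := by
    intro c
    have h := hc c
    rw [hd, hu] at h
    have h2 : (2 : F) • (d c * u) = 0 := by
      rw [two_smul]; ring_nf; ring_nf at h; linear_combination h
    have := smul_eq_zero.mp h2
    rcases this with h3 | h3
    · exact absurd h3 two_ne_zero
    · exact h3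
  have hall : ∀ y ∈ Submodule.span F {y : A | ∃ c x : A, y = d c * x}, y * u = 0 := by
    intro y hy
    induction hy using Submodule.span_induction with
    | mem y hmem =>
        obtain ⟨c, x, rfl⟩ := hmem
        rw [mul_comm (d c) x, mul_assoc, key, mul_zero]
    | zero => rw [zero_mul]
    | add a b _ _ ha hb => rw [add_mul, ha, hb, add_zero]
    | smul r a _ ha => rw [smul_mul_assoc, ha, smul_zero]
  have := hall 1 hone
  rwa [one_mul] at this
end
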